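/- Let s ∈ ℕ ∪ {0}, c ≠ 0 a real number, and let (x_j)_{j=1}^{∞} be a sequence of nonzero real numbers with ∑_{j=1}^{∞} 1/|x_j| < ∞. Define t(x) = c·x^s·∏_{j=1}^{∞}(1 − x/x_j) (the infinite product converges absolutely for every real x). Let μ be a finite positive Borel measure on ℝ whose support is an infinite set and which has no mass points at the zeros of t (i.e., μ({z}) = 0 for every real z with t(z) = 0). Assume that polynomials are dense in L²(ℝ, μ) and that t is square-integrable enough that polynomials are dense in L²(ℝ, t(x)² dμ(x)). Then the linear span of the functions {x^n t(x) : n ≥ 0} is dense in L²(ℝ, μ). -/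

import Mathlib

/-! Every zero of `t` is `0` or some `x_j`, so the zero set of `t` is countable and, carrying no
atoms, `μ`-null. Hence `f = (f / t) t` almost everywhere, `f / t ∈ L²(t² dμ)`, and
`‖f - p t‖_{L²(μ)} = ‖f / t - p‖_{L²(t² dμ)}` for every polynomial `p`; density of polynomials
in `L²(t² dμ)` finishes the proof. -/

open MeasureTheory Polynomial Filter Topology Set

noncomputable section

/-- The topological support of a Borel measure on `ℝ`. -/
def msupport (μ : Measure ℝ) : Set ℝ := {x : ℝ | ∀ U ∈ nhds x, μ U ≠ 0}

/-- Real polynomials are dense in `L²(ℝ, μ)`. -/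
def PolyDense (μ : Measure ℝ) : Prop :=
  ∀ f : ℝ → ℝ, MemLp f 2 μ → ∀ ε : ℝ, 0 < ε →
    ∃ p : Polynomial ℝ, eLpNorm (fun x => f x - p.eval x) 2 μ < ENNReal.ofReal ε

section GenusZeroProduct

variable {ι : Type*} {xs : ι → ℝ}

lemma summable_norm_neg_div (hsum : Summable fun j => 1 / |xs j|) (x : ℝ) :
    Summable fun j => ‖-(x / xs j)‖ :=
  (hsum.mul_left |x|).congr fun j => by rw [norm_neg, Real.norm_eq_abs, abs_div]; ring

lemma multipliable_one_sub_div (hsum : Summable fun j => 1 / |xs j|) (x : ℝ) :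
    Multipliable fun j => 1 - x / xs j := by
  simpa only [sub_eq_add_neg] using multipliable_one_add_of_summable (summable_norm_neg_div hsum x)

lemma tprod_one_sub_div_ne_zero (hsum : Summable fun j => 1 / |xs j|) {x : ℝ}
    (hx : ∀ j, xs j ≠ x) : ∏' j, (1 - x / xs j) ≠ 0 := by
  have hfactor : ∀ j, 1 + -(x / xs j) ≠ 0 := fun j => by
    rcases eq_or_ne (xs j) 0 with h0 | h0
    · simp [h0]
    · rw [← sub_eq_add_neg, sub_ne_zero, ne_comm, Ne, div_eq_one_iff_eq h0]
      exact (hx j).symm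
  simpa only [sub_eq_add_neg] using
    tprod_one_add_ne_zero_of_summable hfactor (summable_norm_neg_div hsum x)

end GenusZeroProduct

lemma measurable_tprod_one_sub_div {xs : ℕ → ℝ} (hsum : Summable fun j => 1 / |xs j|) :
    Measurable fun x : ℝ => ∏' j, (1 - x / xs j) :=
  measurable_of_tendsto_metrizable (fun n => by fun_prop)
    (tendsto_pi_nhds.mpr fun x => (multipliable_one_sub_div hsum x).hasProd.tendsto_prod_nat)

lemma ae_ne_zero_of_countable_zeros {α M : Type*} [MeasurableSpace α] [Zero M] {μ : Measure α}
    {g : α → M} (hcount : {x | g x = 0}.Countable) (hmass : ∀ z, g z = 0 → μ {z} = 0) :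
    ∀ᵐ x ∂μ, g x ≠ 0 := by
  rw [ae_iff]
  simp only [not_not]
  rw [← biUnion_of_singleton {x | g x = 0}]
  exact (measure_biUnion_null_iff hcount).mpr hmass

lemma eLpNorm_two_withDensity_sq {α : Type*} [MeasurableSpace α] {μ : Measure α}
    {t : α → ℝ} (ht : Measurable t) (h : α → ℝ) :
    eLpNorm h 2 (μ.withDensity fun x => ENNReal.ofReal (t x ^ 2))
      = eLpNorm (fun x => h x * t x) 2 μ := by
  simp only [eLpNorm_eq_lintegral_rpow_enorm_toReal two_ne_zero ENNReal.ofNat_ne_top]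
  rw [lintegral_withDensity_eq_lintegral_mul_non_measurable _ (ht.pow_const 2).ennreal_ofReal
      (.of_forall fun _ => ENNReal.ofReal_lt_top)]
  congr 1
  refine lintegral_congr fun x => ?_
  simp only [Pi.mul_apply, ENNReal.toReal_ofNat, ENNReal.rpow_ofNat, Real.enorm_eq_ofReal_abs,
    ← ENNReal.ofReal_pow (abs_nonneg _), sq_abs, ← ENNReal.ofReal_mul (sq_nonneg _), mul_pow,
    mul_comm]

lemma memLp_div_withDensity_sq {α : Type*} [MeasurableSpace α] {μ : Measure α}
    {t f : α → ℝ} (ht : Measurable t) (htne : ∀ᵐ x ∂μ, t x ≠ 0) (hf : MemLp f 2 μ) :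
    MemLp (fun x => f x / t x) 2 (μ.withDensity fun x => ENNReal.ofReal (t x ^ 2)) := by
  refine ⟨(hf.1.div₀ ht.aestronglyMeasurable).mono_ac (withDensity_absolutelyContinuous _ _), ?_⟩
  rw [eLpNorm_two_withDensity_sq ht]
  convert hf.eLpNorm_lt_top using 1
  refine eLpNorm_congr_ae ?_
  filter_upwards [htne] with x hx using div_mul_cancel₀ _ hx

lemma exists_eLpNorm_sub_eval_mul_lt {μ : Measure ℝ} {t : ℝ → ℝ} (ht : Measurable t)
    (htne : ∀ᵐ x ∂μ, t x ≠ 0)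
    (hdense : PolyDense (μ.withDensity fun x => ENNReal.ofReal (t x ^ 2)))
    {f : ℝ → ℝ} (hf : MemLp f 2 μ) {ε : ℝ} (hε : 0 < ε) :
    ∃ p : ℝ[X], eLpNorm (fun x => f x - p.eval x * t x) 2 μ < ENNReal.ofReal ε := by
  obtain ⟨p, hp⟩ := hdense _ (memLp_div_withDensity_sq ht htne hf) ε hε
  refine ⟨p, lt_of_eq_of_lt ?_ hp⟩
  rw [eLpNorm_two_withDensity_sq ht]
  refine eLpNorm_congr_ae ?_
  filter_upwards [htne] with x hx
  rw [sub_mul, div_mul_cancel₀ _ hx]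

theorem tdense_infinite_general
    (s : ℕ) (c : ℝ) (hc : c ≠ 0)
    (xs : ℕ → ℝ)
    (hsum : Summable fun j => 1 / |xs j|)
    (t : ℝ → ℝ) (ht : ∀ x, t x = c * x ^ s * ∏' j : ℕ, (1 - x / xs j))
    (μ : Measure ℝ)
    (hmass : ∀ z : ℝ, t z = 0 → μ {z} = 0)
    (hdenseW : PolyDense (μ.withDensity fun x => ENNReal.ofReal ((t x) ^ 2))) :
    ∀ f : ℝ → ℝ, MemLp f 2 μ → ∀ ε : ℝ, 0 < ε →
      ∃ p : Polynomial ℝ,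
        eLpNorm (fun x => f x - p.eval x * t x) 2 μ < ENNReal.ofReal ε := by
  have htm : Measurable t := by
    rw [funext ht]
    exact (measurable_const.mul (measurable_id.pow_const s)).mul
      (measurable_tprod_one_sub_div hsum)
  have hzeros : {x | t x = 0} ⊆ insert 0 (range xs) := by
    intro z (hz : t z = 0)
    rw [ht, mul_eq_zero, mul_eq_zero] at hz
    rcases hz with (hc0 | hz0) | hprod
    · exact absurd hc0 hc
    · exact Or.inl (eq_zero_of_pow_eq_zero hz0)
    · by_contra hz
      exact tprod_one_sub_div_ne_zero hsum (fun j h => hz (Or.inr ⟨j, h⟩)) hprod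
  have htne : ∀ᵐ x ∂μ, t x ≠ 0 :=
    ae_ne_zero_of_countable_zeros (((countable_range xs).insert 0).mono hzeros) hmass
  exact fun f hf ε hε => exists_eLpNorm_sub_eval_mul_lt htm htne hdenseW hf hε

/-- **Theorem 2.1 (M = ∞).** Let `t(x) = c xˢ ∏_{j=1}^∞ (1 - x/x_j)` be a genus-zero entire
function, where `c ≠ 0`, the `x_j` are nonzero and `∑ 1/|x_j| < ∞`.  Let `μ` be a finite
positive measure on `ℝ` with infinite support and no mass points at the zeros of `t`.  If
polynomials are dense in `L²(μ)` and in `L²(t² dμ)`, then the linear span of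
`{xⁿ t(x) : n ≥ 0}` is dense in `L²(μ)`. -/
theorem tdense_infinite
    (s : ℕ) (c : ℝ) (hc : c ≠ 0)
    (xs : ℕ → ℝ) (hxs : ∀ j, xs j ≠ 0)
    (hsum : Summable fun j => 1 / |xs j|)
    (t : ℝ → ℝ) (ht : ∀ x, t x = c * x ^ s * ∏' j : ℕ, (1 - x / xs j))
    (μ : Measure ℝ) [IsFiniteMeasure μ]
    (hsupp : (msupport μ).Infinite)
    (hmass : ∀ z : ℝ, t z = 0 → μ {z} = 0)
    (hdense : PolyDense μ)
    (hdenseW : PolyDense (μ.withDensity fun x => ENNReal.ofReal ((t x) ^ 2))) :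
    ∀ f : ℝ → ℝ, MemLp f 2 μ → ∀ ε : ℝ, 0 < ε →
      ∃ p : Polynomial ℝ,
        eLpNorm (fun x => f x - p.eval x * t x) 2 μ < ENNReal.ofReal ε :=
  tdense_infinite_general s c hc xs hsum t ht μ hmass hdenseW
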